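/- With necessity arrows at higher type, the type A = Nat ⇝ (Nat→(Nat ⇝ (Nat→Nat))) does not furnish finite counterexamples: letting add = fix f.λp.(let (y,z)=p in if y then z else succ(f (pred(y), z))) and T = λw.λx.λy.λz.((fix f.λu.(if u then add (y,z) else f (pred(u)))) x), the value T is not in ⟦A⟧, yet for every k ∈ ℕ the value T_k = λw.λx.λy.λz.((fixᵏ f.λu.(if u then add (y,z) else f (pred(u)))) x) obtained by replacing the inner fixpoint by its k-th approximant is in ⟦A⟧. -/

import Mathlib

/-!
Both `T` and `T_k` ignore their first argument, so each lies in `⟦Nat ⇝ B⟧`, where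
`B = Nat → (Nat ⇝ (Nat → Nat))`, iff its body lying in `⟦B⟧` forces every closed value to be a
numeral. On input `m̄` the loop in `T` counts down to `add (y, z)`; at `z = 0̄` this gets stuck
unless `y` is a numeral, so the body of `T` is in `⟦B⟧`, and `λx.x` is not a numeral. The `k`-th
approximant instead runs out of fuel on input `k̄` before reaching `add`, so at `x = k̄` it diverges
whatever `y` and `z` are; then `y = λx.x` would have to be a numeral, hence the body of `T_k` is
not in `⟦B⟧` and `T_k ∈ ⟦A⟧` holds vacuously.
-/

namespace PCF

/-- Terms of the simple CBV, PCF-like language.  Variables are natural numbers. -/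
inductive Tm : Type
  | var : ℕ → Tm
  | zero : Tm
  | succ : Tm → Tm
  | pred : Tm → Tm
  | ifz : Tm → Tm → Tm → Tm
  | abs : ℕ → Tm → Tm
  | app : Tm → Tm → Tm
  | fix : ℕ → Tm → Tm
  | pair : Tm → Tm → Tm
  | lett : ℕ → ℕ → Tm → Tm → Tm
  deriving DecidableEq

/-- The numeral `succ^n(zero)`. -/
def numeral : ℕ → Tm
  | 0 => .zero
  | n + 1 => .succ (numeral n)

/-- Values. -/
inductive IsValue : Tm → Prop
  | var (x : ℕ) : IsValue (.var x)
  | num (n : ℕ) : IsValue (numeral n)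
  | pair {V W : Tm} : IsValue V → IsValue W → IsValue (.pair V W)
  | abs (x : ℕ) (M : Tm) : IsValue (.abs x M)

/-- Capture-permitting substitution `M[N/x]` (adequate since we only ever
substitute closed terms). -/
def subst (x : ℕ) (N : Tm) : Tm → Tm
  | .var y => if y = x then N else .var y
  | .zero => .zero
  | .succ M => .succ (subst x N M)
  | .pred M => .pred (subst x N M)
  | .ifz M P Q => .ifz (subst x N M) (subst x N P) (subst x N Q)
  | .abs y M => if y = x then .abs y M else .abs y (subst x N M)
  | .app M P => .app (subst x N M) (subst x N P)
  | .fix y M => if y = x then .fix y M else .fix y (subst x N M)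
  | .pair M P => .pair (subst x N M) (subst x N P)
  | .lett y z M P =>
      .lett y z (subst x N M) (if y = x ∨ z = x then P else subst x N P)

/-- Free variables. -/
def fv : Tm → Finset ℕ
  | .var y => {y}
  | .zero => ∅
  | .succ M => fv M
  | .pred M => fv M
  | .ifz M P Q => fv M ∪ fv P ∪ fv Q
  | .abs y M => fv M \ {y}
  | .app M P => fv M ∪ fv P
  | .fix y M => fv M \ {y}
  | .pair M P => fv M ∪ fv P
  | .lett y z M P => fv M ∪ (fv P \ {y, z})

def ClosedTm (M : Tm) : Prop := fv M = ∅

/-- One-step call-by-value reduction (closure of the redex rules under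
evaluation contexts). -/
inductive Step : Tm → Tm → Prop
  | ifz_zero {N P : Tm} : Step (.ifz (numeral 0) N P) N
  | ifz_succ {n : ℕ} {N P : Tm} : Step (.ifz (numeral (n + 1)) N P) P
  | lett_beta {x y : ℕ} {V W M : Tm} : IsValue V → IsValue W →
      Step (.lett x y (.pair V W) M) (subst y W (subst x V M))
  | fix_step {x : ℕ} {M : Tm} : Step (.fix x M) (subst x (.fix x M) M)
  | pred_zero : Step (.pred (numeral 0)) (numeral 0)
  | pred_succ {n : ℕ} : Step (.pred (numeral (n + 1))) (numeral n)
  | beta {x : ℕ} {M V : Tm} : IsValue V → Step (.app (.abs x M) V) (subst x V M)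
  | succ_ctx {M M' : Tm} : Step M M' → Step (.succ M) (.succ M')
  | pred_ctx {M M' : Tm} : Step M M' → Step (.pred M) (.pred M')
  | pair_left {M M' N : Tm} : Step M M' → Step (.pair M N) (.pair M' N)
  | pair_right {V N N' : Tm} : IsValue V → Step N N' → Step (.pair V N) (.pair V N')
  | lett_ctx {x y : ℕ} {M M' N : Tm} : Step M M' → Step (.lett x y M N) (.lett x y M' N)
  | ifz_ctx {M M' N P : Tm} : Step M M' → Step (.ifz M N P) (.ifz M' N P)
  | app_right {x : ℕ} {M N N' : Tm} : Step N N' →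
      Step (.app (.abs x M) N) (.app (.abs x M) N')
  | app_left {M M' N : Tm} : Step M M' → Step (.app M N) (.app M' N)

/-- Many-step reduction. -/
def Steps : Tm → Tm → Prop := Relation.ReflTransGen Step

def NormalForm (M : Tm) : Prop := ¬ ∃ N, Step M N

def Evaluates (M : Tm) : Prop := ∃ V, Steps M V ∧ IsValue V

/-- `M` diverges: it has no normal form. -/
def Diverges (M : Tm) : Prop := ¬ ∃ N, Steps M N ∧ NormalForm N

def Stuck (M : Tm) : Prop := NormalForm M ∧ ¬ IsValue M

def GoesWrong (M : Tm) : Prop := ∃ P, Steps M P ∧ Stuck P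

/-- `div` = `fix x. x`. -/
def divTm : Tm := .fix 0 (.var 0)

/-- `P ≲ N`: if `P` reduces to a normal form then `N` reduces to the same
normal form. -/
def RefBelow (P N : Tm) : Prop := ∀ R, Steps P R → NormalForm R → Steps N R

/-- Fixpoint approximants. -/
def fixApprox (x : ℕ) (M : Tm) : ℕ → Tm
  | 0 => divTm
  | n + 1 => subst x (fixApprox x M n) M


/-- Extended types: arbitrary types allowed on the right of the necessity
arrow. -/
inductive Ty : Type
  | nat : Ty
  | prod : Ty → Ty → Ty
  | arrow : Ty → Ty → Ty
  | narrow : Ty → Ty → Ty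
  | ok : Ty
  deriving DecidableEq

/-- `T⟦·⟧` applied to a set of values: the terms that evaluate into it. -/
def TSem (Sv : Tm → Prop) (M : Tm) : Prop :=
  ClosedTm M ∧ ∃ V, Steps M V ∧ IsValue V ∧ Sv V

/-- `TBar⟦·⟧`: evaluate into the set, or diverge. -/
def TBarSem (Sv : Tm → Prop) (M : Tm) : Prop :=
  TSem Sv M ∨ (ClosedTm M ∧ Diverges M)

/-- Semantics of (extended) types, as sets of closed values. -/
def Sem : Ty → Tm → Prop
  | .nat => fun M => ∃ n, M = numeral n
  | .prod A B => fun M => ∃ V W, M = .pair V W ∧ Sem A V ∧ Sem B W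
  | .arrow A B => fun M => ∃ x P, M = .abs x P ∧ ClosedTm M ∧
      ∀ V, ClosedTm V → IsValue V → Sem A V → TBarSem (Sem B) (subst x V P)
  | .narrow A B => fun M => ∃ x P, M = .abs x P ∧ ClosedTm M ∧
      ∀ V, ClosedTm V → IsValue V → TSem (Sem B) (subst x V P) → Sem A V
  | .ok => fun M => ClosedTm M ∧ IsValue M

/-- `add = fix f. λp. let (y,z) = p in if y then z else succ (f (pred y, z))`
(with `f = 0`, `p = 1`, `y = 2`, `z = 3`). -/
def addTm : Tm :=
  .fix 0 (.abs 1 (.lett 2 3 (.var 1)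
    (.ifz (.var 2) (.var 3)
      (.succ (.app (.var 0) (.pair (.pred (.var 2)) (.var 3)))))))

/-- `λu. if u then add (y,z) else f (pred u)` (with `f = 0`, `u = 6`, and the
free variables `y = 2`, `z = 3`). -/
def innerBody : Tm :=
  .abs 6 (.ifz (.var 6)
    (.app addTm (.pair (.var 2) (.var 3)))
    (.app (.var 0) (.pred (.var 6))))

/-- `T = λw.λx.λy.λz. ((fix f. λu. if u then add (y,z) else f (pred u)) x)`
(with `w = 4`, `x = 5`, `y = 2`, `z = 3`). -/
def bigT : Tm :=
  .abs 4 (.abs 5 (.abs 2 (.abs 3 (.app (.fix 0 innerBody) (.var 5)))))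

/-- `T_k`: the same value with the inner fixpoint replaced by its `k`-th
approximant. -/
def bigTk (k : ℕ) : Tm :=
  .abs 4 (.abs 5 (.abs 2 (.abs 3 (.app (fixApprox 0 innerBody k) (.var 5)))))

/-- The type `Nat ⇝ (Nat → (Nat ⇝ (Nat → Nat)))`. -/
def tyA : Ty := .narrow .nat (.arrow .nat (.narrow .nat (.arrow .nat .nat)))

theorem IsValue.not_step {V N : Tm} (hV : IsValue V) : ¬ Step V N := by
  induction hV generalizing N with
  | num n =>
    induction n generalizing N with
    | zero => rintro ⟨⟩
    | succ n ih => rintro (_ | _ | _ | _ | _ | _ | _ | h); exact ih h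
  | pair _ _ ih₁ ih₂ =>
    rintro (_ | _ | _ | _ | _ | _ | _ | _ | _ | h | ⟨_, h⟩) <;> [exact ih₁ h; exact ih₂ h]
  | _ => rintro ⟨⟩

theorem step_deterministic : Relator.RightUnique Step := by
  intro M N₁ N₂ h₁ h₂
  induction h₁ generalizing N₂ with
  | ifz_succ | pred_succ =>
    -- `cases` cannot unify `numeral n` with `numeral m`, so the numeral is abstracted first.
    generalize hQ : numeral _ = Q at h₂
    cases h₂ <;> first
      | simp_all [numeral]; done
      | subst hQ; exact absurd ‹Step _ _› (IsValue.num _).not_step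
  | _ =>
    cases h₂ <;> first
      | rfl
      | (congr 1; apply_assumption; assumption)
      | (exfalso; solve_by_elim [IsValue.not_step, IsValue.abs, IsValue.num 0, IsValue.pair])
      | exact absurd ‹Step (numeral _) _› (IsValue.num _).not_step

theorem normalForm_of_isValue {V : Tm} (hV : IsValue V) : NormalForm V :=
  fun ⟨_, h⟩ => hV.not_step h

theorem Steps.eq_of_normalForm {M N : Tm} (hM : NormalForm M) (h : Steps M N) : N = M := by
  rcases Relation.ReflTransGen.cases_head h with rfl | ⟨P, hP, -⟩
  · rfl
  · exact absurd ⟨P, hP⟩ hM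

theorem Steps.to_normalForm {M N R : Tm} (hR : Steps M R) (hRnf : NormalForm R)
    (hN : Steps M N) : Steps N R := by
  rcases Relation.ReflTransGen.total_of_right_unique step_deterministic hN hR with h | h
  · exact h
  · rw [Steps.eq_of_normalForm hRnf h]; exact .refl

theorem Diverges.of_step {M M' : Tm} (h : Step M M') (hM' : Diverges M') : Diverges M :=
  fun ⟨R, hR, hRnf⟩ => hM' ⟨R, hR.to_normalForm hRnf (.single h), hRnf⟩

theorem diverges_app_divTm (N : Tm) : Diverges (.app divTm N) := by
  have hstep : Step (.app divTm N) (.app divTm N) := .app_left .fix_step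
  have hsteps {R : Tm} (h : Steps (.app divTm N) R) : R = .app divTm N := by
    induction h with
    | refl => rfl
    | tail _ h ih => subst ih; exact step_deterministic h hstep
  rintro ⟨R, hR, hRnf⟩
  exact hRnf ⟨_, hsteps hR ▸ hstep⟩

theorem GoesWrong.of_steps {M N : Tm} (h : Steps M N) (hN : GoesWrong N) : GoesWrong M :=
  let ⟨P, hP, hPstuck⟩ := hN
  ⟨P, h.trans hP, hPstuck⟩

theorem not_tSem_of_goesWrong {S : Tm → Prop} {M : Tm} (h : GoesWrong M) : ¬ TSem S M := by
  rintro ⟨-, V, hV, hVval, -⟩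
  obtain ⟨P, hP, hPnf, hPval⟩ := h
  have hPV : V = P :=
    Steps.eq_of_normalForm hPnf (Steps.to_normalForm hV (normalForm_of_isValue hVval) hP)
  exact hPval (hPV ▸ hVval)

theorem not_tBarSem_of_goesWrong {S : Tm → Prop} {M : Tm} (h : GoesWrong M) :
    ¬ TBarSem S M := by
  rintro (hM | ⟨-, hM⟩)
  · exact not_tSem_of_goesWrong h hM
  · obtain ⟨P, hP, hPnf, -⟩ := h
    exact hM ⟨P, hP, hPnf⟩

theorem subst_eq_self_of_notMem_fv {x : ℕ} (N : Tm) {M : Tm} (h : x ∉ fv M) :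
    subst x N M = M := by
  induction M with
  | var y => simp_all [subst, fv, eq_comm]
  | abs y M ih | fix y M ih =>
    by_cases hy : y = x
    · simp [subst, hy]
    · have hM : x ∉ fv M := fun hx => h (Finset.mem_sdiff.2 ⟨hx, by simpa using Ne.symm hy⟩)
      simp [subst, hy, ih hM]
  | lett y z M P ihM ihP =>
    have hM : x ∉ fv M := fun hx => h (Finset.mem_union_left _ hx)
    by_cases hyz : y = x ∨ z = x
    · simp [subst, hyz, ihM hM]
    · have hP : x ∉ fv P := fun hx =>
        h (Finset.mem_union_right _ (Finset.mem_sdiff.2 ⟨hx, by simp; omega⟩))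
      simp [subst, hyz, ihM hM, ihP hP]
  | _ => simp_all [subst, fv]

theorem subst_eq_self_of_closed {M : Tm} (hM : ClosedTm M) (x : ℕ) (N : Tm) :
    subst x N M = M :=
  subst_eq_self_of_notMem_fv N (by simp [show fv M = ∅ from hM])

theorem fv_subst_subset (x : ℕ) (N M : Tm) : fv (subst x N M) ⊆ fv M \ {x} ∪ fv N := by
  induction M with
  | var y => by_cases hy : y = x <;> simp [subst, fv, hy]
  | abs y M ih | fix y M ih =>
    by_cases hy : y = x
    · simp [subst, fv, hy]
    · simp only [subst, fv, hy, if_false, Finset.subset_iff] at ih ⊢; grind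
  | lett y z M P ihM ihP =>
    by_cases hyz : y = x ∨ z = x
    · simp only [subst, fv, hyz, if_true, Finset.subset_iff] at ihM ihP ⊢; grind
    · simp only [subst, fv, hyz, if_false, Finset.subset_iff] at ihM ihP ⊢; grind
  | _ => simp only [subst, fv, Finset.subset_iff] at *; grind

theorem ClosedTm.subst_of_abs {x : ℕ} {M N : Tm} (hM : ClosedTm (.abs x M))
    (hN : ClosedTm N) : ClosedTm (subst x N M) := by
  have h := fv_subst_subset x N M
  rwa [show fv M \ {x} = ∅ from hM, show fv N = ∅ from hN, Finset.union_empty,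
    Finset.subset_empty] at h

theorem fv_fixApprox_subset (f : ℕ) (M : Tm) (k : ℕ) : fv (fixApprox f M k) ⊆ fv M \ {f} := by
  induction k with
  | zero => simp [fixApprox, divTm, fv]
  | succ k ih =>
    exact (fv_subst_subset f _ M).trans (Finset.union_subset subset_rfl ih)

theorem closedTm_numeral (n : ℕ) : ClosedTm (numeral n) := by
  induction n with
  | zero => rfl
  | succ n ih => exact ih

theorem subst_numeral (x : ℕ) (N : Tm) (n : ℕ) : subst x N (numeral n) = numeral n :=
  subst_eq_self_of_closed (closedTm_numeral n) x N

theorem closedTm_abs_var (x : ℕ) : ClosedTm (.abs x (.var x)) := by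
  simp [ClosedTm, fv]

theorem subst_divTm (x : ℕ) (N : Tm) : subst x N divTm = divTm :=
  subst_eq_self_of_closed (show fv divTm = ∅ by decide) x N

theorem closedTm_addTm : ClosedTm addTm := show fv addTm = ∅ by decide

theorem subst_addTm (x : ℕ) (N : Tm) : subst x N addTm = addTm :=
  subst_eq_self_of_closed closedTm_addTm x N

theorem tSem_iff_of_isValue {S : Tm → Prop} {V : Tm} (hV : IsValue V) :
    TSem S V ↔ ClosedTm V ∧ S V := by
  refine ⟨fun ⟨hc, W, hW, _, hS⟩ => ⟨hc, ?_⟩, fun ⟨hc, hS⟩ => ⟨hc, V, .refl, hV, hS⟩⟩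
  rwa [← Steps.eq_of_normalForm (normalForm_of_isValue hV) hW]

theorem tBarSem_iff_of_isValue {S : Tm → Prop} {V : Tm} (hV : IsValue V) :
    TBarSem S V ↔ ClosedTm V ∧ S V := by
  rw [TBarSem, tSem_iff_of_isValue hV]
  exact ⟨fun h => h.resolve_right fun ⟨_, hD⟩ => hD ⟨V, .refl, normalForm_of_isValue hV⟩, .inl⟩

theorem sem_arrow_abs {A B : Ty} {x : ℕ} {P : Tm} :
    Sem (.arrow A B) (.abs x P) ↔ ClosedTm (.abs x P) ∧
      ∀ V, ClosedTm V → IsValue V → Sem A V → TBarSem (Sem B) (subst x V P) := by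
  simp [Sem]

theorem sem_narrow_abs {A B : Ty} {x : ℕ} {P : Tm} :
    Sem (.narrow A B) (.abs x P) ↔ ClosedTm (.abs x P) ∧
      ∀ V, ClosedTm V → IsValue V → TSem (Sem B) (subst x V P) → Sem A V := by
  simp [Sem]

theorem sem_narrow_abs_of_closed {A B : Ty} {x : ℕ} {P : Tm} (hP : ClosedTm P)
    (hPv : IsValue P) :
    Sem (.narrow A B) (.abs x P) ↔ (Sem B P → ∀ V, ClosedTm V → IsValue V → Sem A V) := by
  have habs : ClosedTm (.abs x P) := by simp [ClosedTm, fv, show fv P = ∅ from hP]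
  simp only [sem_narrow_abs, subst_eq_self_of_closed hP, tSem_iff_of_isValue hPv, hP,
    true_and, habs]
  exact ⟨fun h hB V hVc hV => h V hVc hV hB, fun h V hVc hV hB => h hB V hVc hV⟩

theorem not_sem_nat_abs {x : ℕ} {M : Tm} : ¬ Sem .nat (.abs x M) := by
  rintro ⟨n, h⟩
  cases n <;> simp [numeral] at h

def countdown (f u : ℕ) (B : Tm) : Tm :=
  .abs u (.ifz (.var u) B (.app (.var f) (.pred (.var u))))

theorem innerBody_eq_countdown :
    innerBody = countdown 0 6 (.app addTm (.pair (.var 2) (.var 3))) := rfl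

theorem subst_countdown {x f u : ℕ} (hf : f ≠ x) (hu : u ≠ x) (N B : Tm) :
    subst x N (countdown f u B) = countdown f u (subst x N B) := by
  simp [countdown, subst, hf, hu]

/-- The bodies `B` are arbitrary because on inputs `≥ k` they are never reached; this is what
makes the shape of `fixApprox f (countdown f u B) k` stable under substitution. -/
inductive CountdownApprox (u : ℕ) : ℕ → Tm → Prop
  | zero : CountdownApprox u 0 divTm
  | succ {k : ℕ} {W : Tm} (B : Tm) : CountdownApprox u k W →
      CountdownApprox u (k + 1) (.abs u (.ifz (.var u) B (.app W (.pred (.var u)))))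

theorem countdownApprox_fixApprox {f u : ℕ} (hu : u ≠ f) (B : Tm) (k : ℕ) :
    CountdownApprox u k (fixApprox f (countdown f u B) k) := by
  induction k with
  | zero => exact .zero
  | succ k ih =>
    have := ih.succ (subst f (fixApprox f (countdown f u B) k) B)
    simpa [fixApprox, countdown, subst, hu] using this

namespace CountdownApprox

variable {u k : ℕ} {W : Tm}

theorem subst {x : ℕ} (hx : u ≠ x) (N : Tm) (h : CountdownApprox u k W) :
    CountdownApprox u k (PCF.subst x N W) := by
  induction h with
  | zero => rw [subst_divTm]; exact .zero
  | succ B _ ih => simpa [PCF.subst, hx] using ih.succ (PCF.subst x N B)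

theorem subst_eq_self (N : Tm) (h : CountdownApprox u k W) : PCF.subst u N W = W := by
  cases h <;> simp [PCF.subst, subst_divTm]

theorem diverges (h : CountdownApprox u k W) {m : ℕ} (hkm : k ≤ m) :
    Diverges (.app W (numeral m)) := by
  induction h generalizing m with
  | zero => exact diverges_app_divTm _
  | @succ k W B hW ih =>
    obtain ⟨m, rfl⟩ := Nat.exists_eq_add_of_le' (Nat.zero_lt_of_lt hkm)
    have hbeta := Step.beta (x := u) (M := .ifz (.var u) B (.app W (.pred (.var u))))
      (IsValue.num (m + 1))
    simp only [PCF.subst, if_true, hW.subst_eq_self] at hbeta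
    refine Diverges.of_step hbeta (Diverges.of_step .ifz_succ ?_)
    cases hW with
    | zero => exact diverges_app_divTm _
    | succ => exact Diverges.of_step (.app_right .pred_succ) (ih (by omega))

end CountdownApprox

theorem steps_app_fix_countdown {f u : ℕ} (hu : u ≠ f) {B : Tm} (hB : ClosedTm B) (m : ℕ) :
    Steps (.app (.fix f (countdown f u B)) (numeral m)) B := by
  set F := Tm.fix f (countdown f u B)
  have hunfold : Step F (.abs u (.ifz (.var u) B (.app F (.pred (.var u))))) := by
    simpa [F, countdown, subst, hu, subst_eq_self_of_closed hB] using
      Step.fix_step (x := f) (M := countdown f u B)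
  have hbeta (m : ℕ) : Step (.app (.abs u (.ifz (.var u) B (.app F (.pred (.var u))))) (numeral m))
      (.ifz (numeral m) B (.app F (.pred (numeral m)))) := by
    simpa [F, countdown, subst, hu, subst_eq_self_of_closed hB] using
      Step.beta (x := u) (M := .ifz (.var u) B (.app F (.pred (.var u)))) (IsValue.num m)
  refine .head (.app_left hunfold) ?_
  induction m with
  | zero => exact .head (hbeta 0) (.single .ifz_zero)
  | succ m ih =>
    exact .head (hbeta (m + 1)) (.head .ifz_succ (.head (.app_left hunfold)
      (.head (.app_right .pred_succ) ih)))

theorem stuck_ifz {V N P : Tm} (hV : IsValue V) (hVnum : ∀ n, V ≠ numeral n) :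
    Stuck (.ifz V N P) := by
  refine ⟨?_, fun h => ?_⟩
  · rintro ⟨X, hX⟩
    cases hX with
    | ifz_zero => exact hVnum 0 rfl
    | ifz_succ => exact hVnum _ rfl
    | ifz_ctx h => exact hV.not_step h
  · generalize hT : Tm.ifz V N P = T at h
    cases h with
    | num n => cases n <;> simp [numeral] at hT
    | _ => simp at hT

theorem goesWrong_app_addTm {V W : Tm} (hV : IsValue V) (hVc : ClosedTm V)
    (hVnum : ∀ n, V ≠ numeral n) (hW : IsValue W) :
    GoesWrong (.app addTm (.pair V W)) := by
  refine ⟨_, ?_, stuck_ifz (N := W) (P := .succ (.app addTm (.pair (.pred V) W))) hV hVnum⟩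
  refine .head (.app_left .fix_step) (.head (.beta (hV.pair hW)) (.single ?_))
  simpa [subst, addTm, subst_eq_self_of_closed hVc] using
    Step.lett_beta (x := 2) (y := 3) (M := .ifz (.var 2) (.var 3)
      (.succ (.app addTm (.pair (.pred (.var 2)) (.var 3))))) hV hW

theorem sem_bigT_body : Sem (.arrow .nat (.narrow .nat (.arrow .nat .nat)))
    (.abs 5 (.abs 2 (.abs 3 (.app (.fix 0 innerBody) (.var 5))))) := by
  have hclosed : ClosedTm (.abs 5 (.abs 2 (.abs 3 (.app (.fix 0 innerBody) (.var 5))))) :=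
    show fv _ = ∅ by decide
  refine sem_arrow_abs.2 ⟨hclosed, ?_⟩
  rintro _ - - ⟨m, rfl⟩
  have hx : subst 5 (numeral m) (.abs 2 (.abs 3 (.app (.fix 0 innerBody) (.var 5))))
      = .abs 2 (.abs 3 (.app (.fix 0 innerBody) (numeral m))) := by
    simp [subst, innerBody_eq_countdown, subst_countdown, subst_addTm]
  have hm := hclosed.subst_of_abs (closedTm_numeral m)
  rw [hx] at hm ⊢
  rw [tBarSem_iff_of_isValue (.abs _ _), sem_narrow_abs]
  refine ⟨hm, hm, fun Y hYc hY hT => ?_⟩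
  by_contra hYnum
  simp only [Sem, not_exists] at hYnum
  have hy : subst 2 Y (.abs 3 (.app (.fix 0 innerBody) (numeral m)))
      = .abs 3 (.app (.fix 0 (countdown 0 6 (.app addTm (.pair Y (.var 3))))) (numeral m)) := by
    simp [subst, innerBody_eq_countdown, subst_countdown, subst_addTm, subst_numeral]
  rw [hy, tSem_iff_of_isValue (.abs _ _), sem_arrow_abs] at hT
  have h0 := hT.2.2 (numeral 0) (closedTm_numeral 0) (.num 0) ⟨0, rfl⟩
  have hz : subst 3 (numeral 0)
        (.app (.fix 0 (countdown 0 6 (.app addTm (.pair Y (.var 3))))) (numeral m))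
      = .app (.fix 0 (countdown 0 6 (.app addTm (.pair Y (numeral 0))))) (numeral m) := by
    simp [subst, subst_countdown, subst_addTm, subst_numeral, subst_eq_self_of_closed hYc]
  have hK : ClosedTm (.app addTm (.pair Y (numeral 0))) := by
    simp [ClosedTm, fv, show fv addTm = ∅ from closedTm_addTm, show fv Y = ∅ from hYc,
      show fv (numeral 0) = ∅ from closedTm_numeral 0]
  refine not_tBarSem_of_goesWrong ?_ (hz ▸ h0)
  exact (goesWrong_app_addTm hY hYc hYnum (.num 0)).of_steps
    (steps_app_fix_countdown (by decide) hK m)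

theorem not_sem_bigTk_body {k : ℕ} {W : Tm} (hW : CountdownApprox 6 k W) :
    ¬ Sem (.arrow .nat (.narrow .nat (.arrow .nat .nat)))
      (.abs 5 (.abs 2 (.abs 3 (.app W (.var 5))))) := by
  intro h
  have hk := (sem_arrow_abs.1 h).2 (numeral k) (closedTm_numeral k) (.num k) ⟨k, rfl⟩
  have hx : subst 5 (numeral k) (.abs 2 (.abs 3 (.app W (.var 5))))
      = .abs 2 (.abs 3 (.app (subst 5 (numeral k) W) (numeral k))) := by
    simp [subst]
  rw [hx, tBarSem_iff_of_isValue (.abs _ _), sem_narrow_abs] at hk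
  obtain ⟨-, hclosed, hk⟩ := hk
  set W' := subst 2 (.abs 0 (.var 0)) (subst 5 (numeral k) W)
  have hy : subst 2 (.abs 0 (.var 0)) (.abs 3 (.app (subst 5 (numeral k) W) (numeral k)))
      = .abs 3 (.app W' (numeral k)) := by
    simp [subst, W', subst_numeral]
  have hclosed' := hclosed.subst_of_abs (closedTm_abs_var 0)
  rw [hy] at hclosed'
  refine not_sem_nat_abs (hk (.abs 0 (.var 0)) (closedTm_abs_var 0) (.abs _ _) ?_)
  rw [hy, tSem_iff_of_isValue (.abs _ _), sem_arrow_abs]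
  refine ⟨hclosed', hclosed', fun N hN _ _ => .inr ⟨?_, ?_⟩⟩
  · simpa [subst, subst_numeral] using hclosed'.subst_of_abs hN
  · simp only [subst, subst_numeral]
    exact (((hW.subst (by decide) _).subst (by decide) _).subst (by decide) _).diverges le_rfl

theorem closedTm_bigTk_body (k : ℕ) :
    ClosedTm (.abs 5 (.abs 2 (.abs 3 (.app (fixApprox 0 innerBody k) (.var 5))))) := by
  have h : fv (fixApprox 0 innerBody k) ⊆ {2, 3} :=
    (fv_fixApprox_subset 0 innerBody k).trans (by decide)
  simp only [ClosedTm, fv, Finset.eq_empty_iff_forall_notMem, Finset.mem_sdiff,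
    Finset.mem_union, Finset.mem_singleton]
  rintro a ⟨⟨⟨ha | rfl, h3⟩, h2⟩, h5⟩
  · have := h ha
    simp_all
  · exact h5 rfl

/-- with necessity at higher type, the type
`Nat ⇝ (Nat → (Nat ⇝ (Nat → Nat)))` does not furnish finite counterexamples:
`T` is not in the type, but each finite approximation `T_k` is. -/
theorem no_finite_counterexamples :
    ¬ Sem tyA bigT ∧ ∀ k : ℕ, Sem tyA (bigTk k) := by
  refine ⟨?_, fun k => ?_⟩
  · rw [bigT, tyA, sem_narrow_abs_of_closed (show fv _ = ∅ by decide) (.abs _ _)]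
    exact fun h => not_sem_nat_abs (h sem_bigT_body _ (closedTm_abs_var 0) (.abs 0 (.var 0)))
  · rw [bigTk, tyA, sem_narrow_abs_of_closed (closedTm_bigTk_body k) (.abs _ _)]
    exact fun h => absurd h (not_sem_bigTk_body (countdownApprox_fixApprox (by decide) _ k))

end PCF
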